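/- Let P be an irreducible 2×2 stochastic matrix with entries P = [[p, 1−p],[1−q, q]]. Then P is embeddable (there exists a generator matrix Q with e^Q = P) if and only if trace(P) = p + q > 1, which is also equivalent to det(P) > 0 and to P being reversibly embeddable. -/

import Mathlib

open Matrix

/-- `Q` is a generator matrix: nonnegative off-diagonal entries, rows sum to 0. -/
def IsGenerator {n : ℕ} (Q : Matrix (Fin n) (Fin n) ℝ) : Prop :=
  (∀ i j, i ≠ j → 0 ≤ Q i j) ∧ ∀ i, ∑ j, Q i j = 0

/-- `Q` is a reversible generator matrix. -/
def IsReversibleGenerator {n : ℕ} (Q : Matrix (Fin n) (Fin n) ℝ) : Prop :=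
  IsGenerator Q ∧
  ∃ π : Fin n → ℝ, (∀ i, 0 ≤ π i) ∧ (∑ i, π i = 1) ∧
    ∀ i j, π i * Q i j = π j * Q j i

/-!
Every real matrix exponential has positive determinant, since `exp A = exp (A/2) * exp (A/2)`
is invertible; as `det P = p + q - 1`, this gives necessity. Conversely
`(1 - P)² = (2 - p - q) (1 - P)`, so `E = (1 - P) / (2 - p - q)` is idempotent and
`exp (t E) = 1 + (eᵗ - 1) E`. For `t = log (p + q - 1) < 0` this is `P`, and `t E` is a
generator in detailed balance with the stationary distribution of `P`, which is proportional
to `(1 - q, 1 - p)`.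
-/

theorem IsIdempotentElem.exp_smul {𝔸 : Type*} [Ring 𝔸] [Algebra ℝ 𝔸] [TopologicalSpace 𝔸]
    [IsTopologicalRing 𝔸] [ContinuousSMul ℝ 𝔸] [T2Space 𝔸] {e : 𝔸} (he : IsIdempotentElem e)
    (t : ℝ) : NormedSpace.exp (t • e) = 1 + (Real.exp t - 1) • e := by
  have hterm : ∀ n : ℕ, (n.factorial⁻¹ : ℝ) • (t • e) ^ n =
      ((n.factorial⁻¹ : ℝ) • t ^ n) • e + if n = 0 then 1 - e else 0 := by
    rintro (_ | n)
    · simp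
    · rw [smul_pow, he.pow_succ_eq, smul_smul, if_neg n.succ_ne_zero, add_zero, smul_eq_mul]
  have hsum : HasSum (fun n : ℕ => (n.factorial⁻¹ : ℝ) • (t • e) ^ n)
      (1 + (Real.exp t - 1) • e) := by
    simp only [hterm]
    convert ((NormedSpace.exp_series_hasSum_exp' (𝕂 := ℝ) t).smul_const e).add
      (hasSum_ite_eq 0 (1 - e)) using 1
    rw [← Real.exp_eq_exp_ℝ, sub_smul, one_smul]
    abel
  rw [NormedSpace.exp_eq_tsum ℝ]
  exact hsum.tsum_eq

theorem Matrix.det_exp_pos {m : Type*} [Fintype m] [DecidableEq m] (A : Matrix m m ℝ) :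
    0 < (NormedSpace.exp A).det := by
  have hsq : NormedSpace.exp A =
      NormedSpace.exp ((1 / 2 : ℝ) • A) * NormedSpace.exp ((1 / 2 : ℝ) • A) := by
    rw [← Matrix.exp_add_of_commute _ _ (Commute.refl _), ← add_smul]
    norm_num
  have hne : (NormedSpace.exp A).det ≠ 0 :=
    ((Matrix.isUnit_iff_isUnit_det _).mp (Matrix.isUnit_exp A)).ne_zero
  rw [hsq, det_mul] at hne ⊢
  exact lt_of_le_of_ne (mul_self_nonneg _) hne.symm

section SmulOneSub

variable {n : ℕ} {P : Matrix (Fin n) (Fin n) ℝ} {c : ℝ}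

theorem isGenerator_smul_one_sub (hoff : ∀ i j, i ≠ j → 0 ≤ P i j)
    (hrow : ∀ i, ∑ j, P i j = 1) (hc : c ≤ 0) : IsGenerator (c • (1 - P)) := by
  refine ⟨fun i j hij => ?_, fun i => ?_⟩
  · simpa [one_apply_ne hij] using
      mul_nonneg_of_nonpos_of_nonpos hc (neg_nonpos.mpr (hoff i j hij))
  · simp [← Finset.mul_sum, Finset.sum_sub_distrib, hrow, one_apply]

theorem isReversibleGenerator_smul_one_sub (hoff : ∀ i j, i ≠ j → 0 ≤ P i j)
    (hrow : ∀ i, ∑ j, P i j = 1) (hc : c ≤ 0) {π : Fin n → ℝ} (hπ : ∀ i, 0 ≤ π i)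
    (hπ_sum : ∑ i, π i = 1) (hbal : ∀ i j, π i * P i j = π j * P j i) :
    IsReversibleGenerator (c • (1 - P)) := by
  refine ⟨isGenerator_smul_one_sub hoff hrow hc, π, hπ, hπ_sum, fun i j => ?_⟩
  rcases eq_or_ne i j with rfl | hij
  · rfl
  · simp only [Matrix.smul_apply, Matrix.sub_apply, one_apply_ne hij, one_apply_ne hij.symm,
      smul_eq_mul]
    linear_combination (-c) * hbal i j

end SmulOneSub

def twoState (p q : ℝ) : Matrix (Fin 2) (Fin 2) ℝ := !![p, 1 - p; 1 - q, q]

theorem det_twoState (p q : ℝ) : (twoState p q).det = p + q - 1 := by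
  rw [twoState, det_fin_two_of]; ring

theorem one_sub_twoState_mul_self (p q : ℝ) :
    (1 - twoState p q) * (1 - twoState p q) = (2 - p - q) • (1 - twoState p q) := by
  ext i j; fin_cases i <;> fin_cases j <;>
    simp [twoState, mul_apply, Fin.sum_univ_two, one_apply] <;> ring

theorem exp_smul_one_sub_twoState {p q : ℝ} (h1 : 1 < p + q) (h2 : p + q < 2) :
    NormedSpace.exp ((Real.log (p + q - 1) / (2 - p - q)) • (1 - twoState p q)) =
      twoState p q := by
  have hs : 2 - p - q ≠ 0 := by linarith
  have hE : IsIdempotentElem ((2 - p - q)⁻¹ • (1 - twoState p q)) := by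
    rw [IsIdempotentElem, smul_mul_smul, one_sub_twoState_mul_self, smul_smul]
    congr 1; field_simp
  rw [div_eq_mul_inv, ← smul_smul, hE.exp_smul, Real.exp_log (by linarith), smul_smul]
  rw [show (p + q - 1 - 1) * (2 - p - q)⁻¹ = -1 by field_simp; ring]
  simp

theorem exists_isReversibleGenerator_exp_eq_twoState {p q : ℝ} (hp : p < 1) (hq : q < 1)
    (h : 1 < p + q) :
    ∃ Q, IsReversibleGenerator Q ∧ NormedSpace.exp Q = twoState p q := by
  have hs : 0 < 2 - p - q := by linarith
  refine ⟨_, isReversibleGenerator_smul_one_sub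
    (π := ![(1 - q) / (2 - p - q), (1 - p) / (2 - p - q)]) ?_ ?_ ?_ ?_ ?_ ?_,
    exp_smul_one_sub_twoState h (by linarith)⟩
  · intro i j hij; fin_cases i <;> fin_cases j <;> simp [twoState] at hij ⊢ <;> linarith
  · intro i; fin_cases i <;> simp [twoState, Fin.sum_univ_two]
  · exact div_nonpos_of_nonpos_of_nonneg (Real.log_nonpos (by linarith) (by linarith)) hs.le
  · intro i; fin_cases i <;> simp <;> apply div_nonneg <;> linarith
  · simp only [Fin.sum_univ_two, Matrix.cons_val_zero, Matrix.cons_val_one]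
    rw [← add_div, div_eq_one_iff_eq hs.ne']; ring
  · intro i j; fin_cases i <;> fin_cases j <;> simp [twoState] <;> ring

theorem kendall_two_by_two_general (p q : ℝ)
    (hp1 : p < 1) (hq1 : q < 1) :
    ((∃ Q : Matrix (Fin 2) (Fin 2) ℝ, IsGenerator Q ∧
        NormedSpace.exp Q = !![p, 1 - p; 1 - q, q]) ↔ 1 < p + q) ∧
    (1 < p + q ↔ 0 < (!![p, 1 - p; 1 - q, q] : Matrix (Fin 2) (Fin 2) ℝ).det) ∧
    ((∃ Q : Matrix (Fin 2) (Fin 2) ℝ, IsGenerator Q ∧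
        NormedSpace.exp Q = !![p, 1 - p; 1 - q, q]) ↔
      (∃ Q : Matrix (Fin 2) (Fin 2) ℝ, IsReversibleGenerator Q ∧
        NormedSpace.exp Q = !![p, 1 - p; 1 - q, q])) := by
  have hdet : 1 < p + q ↔ 0 < (twoState p q).det := by
    rw [det_twoState, sub_pos]
  have hrev := exists_isReversibleGenerator_exp_eq_twoState hp1 hq1
  have hembed : (∃ Q, IsGenerator Q ∧ NormedSpace.exp Q = twoState p q) → 1 < p + q :=
    fun ⟨Q, _, hQ⟩ => hdet.mpr (hQ ▸ Q.det_exp_pos)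
  have hforget : (∃ Q, IsReversibleGenerator Q ∧ NormedSpace.exp Q = twoState p q) →
      ∃ Q, IsGenerator Q ∧ NormedSpace.exp Q = twoState p q :=
    fun ⟨Q, hQ, hexp⟩ => ⟨Q, hQ.1, hexp⟩
  exact ⟨⟨hembed, hforget ∘ hrev⟩, hdet, ⟨hrev ∘ hembed, hforget⟩⟩

theorem kendall_two_by_two (p q : ℝ)
    (hp0 : 0 ≤ p) (hq0 : 0 ≤ q) (hp1 : p < 1) (hq1 : q < 1) :
    ((∃ Q : Matrix (Fin 2) (Fin 2) ℝ, IsGenerator Q ∧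
        NormedSpace.exp Q = !![p, 1 - p; 1 - q, q]) ↔ 1 < p + q) ∧
    (1 < p + q ↔ 0 < (!![p, 1 - p; 1 - q, q] : Matrix (Fin 2) (Fin 2) ℝ).det) ∧
    ((∃ Q : Matrix (Fin 2) (Fin 2) ℝ, IsGenerator Q ∧
        NormedSpace.exp Q = !![p, 1 - p; 1 - q, q]) ↔
      (∃ Q : Matrix (Fin 2) (Fin 2) ℝ, IsReversibleGenerator Q ∧
        NormedSpace.exp Q = !![p, 1 - p; 1 - q, q])) :=
  kendall_two_by_two_general p q hp1 hq1
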